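/- In Lens(Set), for any sets X and Y, the selection relation argmax_{X×Y} on (X × Y, ℝ) pushed forward along the lens whose forward map is the identity on X × Y and whose backward map sends a real r to (r, r), composed with summation — equivalently, the selection relation {((x,y), k : X×Y → ℝ²) | (x,y) maximises (x',y') ↦ k(x',y').1 + k(x',y').2} — contains the relation obtained by restricting ε to diagonal contexts, and in general differs from argmax_X ⊠ argmax_Y: exhibit a finite game k : Y² → ℝ² (the prisoner's dilemma) where the two relations applied to k give disjoint nonempty solution sets. -/
import Mathlib


/-- A lens `(A, A') → (B, B')` over `Set`. -/
structure Lens (A A' B B' : Type) where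
  get : A → B
  put : A × B' → A'

/-- A selection relation on `(A, R)` in `Lens(Set)`: states are elements of
`A`, costates are functions `A → R`. -/
abbrev SelRel (A R : Type) : Type := Set (A × (A → R))

/-- Pushforward of selection relations along a lens
`f : (A, R) → (B, S)`: `Sel(f)(ε) = {(a ≫ f, k) | ε(a, f ≫ k)}`. -/
def pushSel {A R B S : Type} (f : Lens A R B S) (ε : SelRel A R) : SelRel B S :=
  {q | ∃ a : A, q.1 = f.get a ∧ (a, fun a' => f.put (a', q.2 (f.get a'))) ∈ ε}

/-- The `argmax` selection relation. -/
def argmaxRel (Z : Type) : SelRel Z ℝ :=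
  {p | ∀ z' : Z, p.2 p.1 ≥ p.2 z'}

/-- The lens on `(Z, ℝ) → (Z, ℝ²)` whose forward map is the identity and
whose backward map sends a pair of rewards to their sum (i.e. the reward is
copied to both and the feedbacks are summed). -/
def sumLens (Z : Type) : Lens Z ℝ Z (ℝ × ℝ) :=
  ⟨fun z => z, fun p => p.2.1 + p.2.2⟩

/-- The Nash product `argmax_X ⊠ argmax_Y` on contexts `k : X × Y → ℝ²`. -/
def nashProdArgmax (X Y : Type) : SelRel (X × Y) (ℝ × ℝ) :=
  {p | (∀ x' : X, (p.2 p.1).1 ≥ (p.2 (x', p.1.2)).1) ∧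
       (∀ y' : Y, (p.2 p.1).2 ≥ (p.2 (p.1.1, y')).2)}

inductive Move : Type
  | C : Move
  | D : Move
deriving DecidableEq

open Move

/-- The prisoner's dilemma payoffs. -/
def PD : Move × Move → ℝ × ℝ
  | (C, C) => (2, 2)
  | (C, D) => (0, 3)
  | (D, C) => (3, 0)
  | (D, D) => (1, 1)

/-- Pushing `argmax_{X×Y}` forward along the diagonal-and-sum lens yields the
selection relation of joint total-payoff maximisation, which in general
differs from the Nash product `argmax_X ⊠ argmax_Y`: for the prisoner's
dilemma the two solution sets are nonempty and disjoint. -/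
theorem pushforward_argmax_vs_nash_product :
    (∀ X Y : Type,
      pushSel (sumLens (X × Y)) (argmaxRel (X × Y)) =
        {p : (X × Y) × (X × Y → ℝ × ℝ) |
          ∀ p' : X × Y, (p.2 p.1).1 + (p.2 p.1).2 ≥ (p.2 p').1 + (p.2 p').2}) ∧
    ({p : Move × Move | (p, PD) ∈ pushSel (sumLens (Move × Move))
        (argmaxRel (Move × Move))}.Nonempty) ∧
    ({p : Move × Move | (p, PD) ∈ nashProdArgmax Move Move}.Nonempty) ∧
    Disjoint
      {p : Move × Move | (p, PD) ∈ pushSel (sumLens (Move × Move))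
        (argmaxRel (Move × Move))}
      {p : Move × Move | (p, PD) ∈ nashProdArgmax Move Move} := by

  have key : ∀ X Y : Type,
      pushSel (sumLens (X × Y)) (argmaxRel (X × Y)) =
        {p : (X × Y) × (X × Y → ℝ × ℝ) |
          ∀ p' : X × Y, (p.2 p.1).1 + (p.2 p.1).2 ≥ (p.2 p').1 + (p.2 p').2} := by
    intro X Y
    ext p
    constructor
    · rintro ⟨a, ha, hmax⟩ p'
      simpa [sumLens, ha] using hmax p'
    · intro h
      exact ⟨p.1, rfl, fun p' => h p'⟩
  refine ⟨key, ⟨(C, C), ?_⟩, ⟨(D, D), ?_⟩, ?_⟩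
  · rw [key]
    intro p'
    rcases p' with ⟨mx, my⟩ <;> cases mx <;> cases my <;> norm_num [PD]
  · constructor
    · intro x'; cases x' <;> norm_num [PD]
    · intro y'; cases y' <;> norm_num [PD]
  · rw [Set.disjoint_left]
    rintro ⟨mx, my⟩ h1 h2
    rw [key] at h1
    cases mx <;> cases my
    · have := h2.1 D; norm_num [PD, nashProdArgmax] at this
    · have := h2.1 D; norm_num [PD, nashProdArgmax] at this
    · have := h2.2 D; norm_num [PD, nashProdArgmax] at this
    · have := h1 (C, C); norm_num [PD] at this
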